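/- Given a Sekiya quadruple (Φ, e₁, e₂, λ) on W, the map J on W ⊕ span(∂ₜ, dt) defined by J(x) = Φ(x) for x ∈ W orthogonal to e₁ and e₂, J(e₁) = λe₁ − (1+λ²)^{1/2}∂ₜ, J(e₂) = −λe₂ − (1+λ²)^{1/2}dt, J(∂ₜ) = (1+λ²)^{1/2}e₁ − λ∂ₜ, J(dt) = (1+λ²)^{1/2}e₂ + λdt, satisfies J² = −Id and J* = −J. -/

import Mathlib

noncomputable section
open Module

variable {W : Type*} [AddCommGroup W] [Module ℝ W]

/-- The pairing on `W' = W ⊕ span(∂ₜ, dt)` extending a pairing `B` on `W`, with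
`∂ₜ, dt` isotropic, `⟨∂ₜ, dt⟩ = 1/2`, and both orthogonal to `W`. -/
def pairX (B : LinearMap.BilinForm ℝ W) (X Y : W × ℝ × ℝ) : ℝ :=
  B X.1 Y.1 + (X.2.1 * Y.2.2 + Y.2.1 * X.2.2) / 2

/-! In `J²X` the vector part `x` of `X` picks up `Φ²x`, whose correction term
`2(1+λ²)(⟨x,e₂⟩e₁ + ⟨x,e₁⟩e₂)` is exactly cancelled by the detour of `x` through `span(∂ₜ, dt)`
and back, because `⟨Φx, e₁⟩ = −λ⟨x, e₁⟩`, `⟨Φx, e₂⟩ = λ⟨x, e₂⟩` and `(√(1+λ²))² = 1 + λ²`. -/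

namespace Sekiya

/-- `∂ₜ` and `dt` are the second and third coordinates of `W × ℝ × ℝ`. -/
def extension (B : LinearMap.BilinForm ℝ W) (Φ : W →ₗ[ℝ] W) (e1 e2 : W) (lam c : ℝ)
    (X : W × ℝ × ℝ) : W × ℝ × ℝ :=
  (Φ X.1 + (X.2.1 * c) • e1 + (X.2.2 * c) • e2,
   -(c * (2 * B X.1 e2)) - lam * X.2.1,
   -(c * (2 * B X.1 e1)) + lam * X.2.2)

variable {B : LinearMap.BilinForm ℝ W} {Φ : W →ₗ[ℝ] W} {e1 e2 : W} {lam c : ℝ}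

theorem pairing_apply_eigenvector (hskew : ∀ x y : W, B (Φ x) y = - B x (Φ y))
    {e : W} {μ : ℝ} (he : Φ e = μ • e) (x : W) : B (Φ x) e = -μ * B x e := by
  rw [hskew, he, map_smul, smul_eq_mul, neg_mul_eq_neg_mul]

theorem pairX_extension (hsymm : ∀ x y : W, B x y = B y x)
    (hskew : ∀ x y : W, B (Φ x) y = - B x (Φ y)) (X Y : W × ℝ × ℝ) :
    pairX B (extension B Φ e1 e2 lam c X) Y = - pairX B X (extension B Φ e1 e2 lam c Y) := by
  obtain ⟨x, p, q⟩ := X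
  obtain ⟨y, p', q'⟩ := Y
  simp only [extension, pairX, map_add, LinearMap.add_apply, LinearMap.smul_apply,
    smul_eq_mul, map_smul, hskew x y, hsymm e1 y, hsymm e2 y]
  ring

theorem extension_extension (hsymm : ∀ x y : W, B x y = B y x)
    (h11 : B e1 e1 = 0) (h22 : B e2 e2 = 0) (h12 : B e1 e2 = 1/2)
    (hskew : ∀ x y : W, B (Φ x) y = - B x (Φ y))
    (hΦ1 : Φ e1 = lam • e1) (hΦ2 : Φ e2 = -lam • e2)
    (hsq : ∀ x : W, Φ (Φ x) = -x + (2 * (1 + lam^2)) • ((B x e2) • e1 + (B x e1) • e2))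
    (hc : c * c = 1 + lam^2) (X : W × ℝ × ℝ) :
    extension B Φ e1 e2 lam c (extension B Φ e1 e2 lam c X) = -X := by
  obtain ⟨x, p, q⟩ := X
  have h21 : B e2 e1 = 1/2 := by rw [hsymm, h12]
  simp only [extension, map_add, map_smul, hsq, hΦ1, hΦ2, LinearMap.add_apply,
    LinearMap.smul_apply, smul_eq_mul, pairing_apply_eigenvector hskew hΦ1,
    pairing_apply_eigenvector hskew hΦ2, h11, h22, h12, h21, Prod.neg_mk, Prod.mk.injEq]
  refine ⟨?_, by linear_combination (-p) * hc, by linear_combination (-q) * hc⟩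
  match_scalars
  · ring
  · linear_combination (-2 * B x e2) * hc
  · linear_combination (-2 * B x e1) * hc

end Sekiya

open Sekiya in
theorem J_from_sekiya_quadruple_general
    (B : LinearMap.BilinForm ℝ W)
    (hsymm : ∀ x y : W, B x y = B y x)
    (Φ : W →ₗ[ℝ] W) (e1 e2 : W) (lam : ℝ)
    (h11 : B e1 e1 = 0) (h22 : B e2 e2 = 0) (h12 : B e1 e2 = 1/2)
    (hskew : ∀ x y : W, B (Φ x) y = - B x (Φ y))
    (hΦ1 : Φ e1 = lam • e1) (hΦ2 : Φ e2 = -lam • e2)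
    (hsq : ∀ x : W, Φ (Φ x)
      = -x + (2 * (1 + lam^2)) • ((B x e2) • e1 + (B x e1) • e2))
    (J : (W × ℝ × ℝ) → (W × ℝ × ℝ))
    (hJ : ∀ X : W × ℝ × ℝ, J X =
      (Φ X.1 + (X.2.1 * Real.sqrt (1 + lam^2)) • e1
        + (X.2.2 * Real.sqrt (1 + lam^2)) • e2,
       -(Real.sqrt (1 + lam^2) * (2 * B X.1 e2)) - lam * X.2.1,
       -(Real.sqrt (1 + lam^2) * (2 * B X.1 e1)) + lam * X.2.2)) :
    -- `J` is indeed the extension described above: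
    (∀ x : W, B x e1 = 0 → B x e2 = 0 → J (x, 0, 0) = (Φ x, 0, 0))
    ∧ J (e1, 0, 0) = (lam • e1, -Real.sqrt (1 + lam^2), 0)
    ∧ J (e2, 0, 0) = (-lam • e2, 0, -Real.sqrt (1 + lam^2))
    ∧ J (0, 1, 0) = (Real.sqrt (1 + lam^2) • e1, -lam, 0)
    ∧ J (0, 0, 1) = (Real.sqrt (1 + lam^2) • e2, 0, lam)
    -- `J² = −Id`:
    ∧ (∀ X, J (J X) = -X)
    -- `J* = −J`:
    ∧ (∀ X Y, pairX B (J X) Y = - pairX B X (J Y)) := by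
  obtain rfl : J = extension B Φ e1 e2 lam (Real.sqrt (1 + lam^2)) := funext hJ
  have hc : Real.sqrt (1 + lam^2) * Real.sqrt (1 + lam^2) = 1 + lam^2 :=
    Real.mul_self_sqrt (by positivity)
  refine ⟨fun x h1 h2 => by simp [extension, h1, h2], by simp [extension, hΦ1, h11, h12],
    by simp [extension, hΦ2, h22, hsymm e2 e1, h12], by simp [extension],
    by simp [extension], extension_extension hsymm h11 h22 h12 hskew hΦ1 hΦ2 hsq hc,
    pairX_extension hsymm hskew⟩

/-- a Sekiya quadruple `(Φ, e₁, e₂, λ)` on `W` determines a generalized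
almost complex structure `J` on `W ⊕ span(∂ₜ,dt)`, the unique linear extension with
`J(x) = Φ(x)` for `x ⊥ e₁,e₂`, `J(e₁) = λe₁ − √(1+λ²)∂ₜ`, `J(e₂) = −λe₂ − √(1+λ²)dt`,
`J(∂ₜ) = √(1+λ²)e₁ − λ∂ₜ`, `J(dt) = √(1+λ²)e₂ + λdt`; it satisfies `J² = −Id`,
`J* = −J`. -/
theorem J_from_sekiya_quadruple
    (B : LinearMap.BilinForm ℝ W)
    (hsymm : ∀ x y : W, B x y = B y x)
    (hnondeg : ∀ x : W, (∀ y : W, B x y = 0) → x = 0)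
    (Φ : W →ₗ[ℝ] W) (e1 e2 : W) (lam : ℝ)
    (h11 : B e1 e1 = 0) (h22 : B e2 e2 = 0) (h12 : B e1 e2 = 1/2)
    (hskew : ∀ x y : W, B (Φ x) y = - B x (Φ y))
    (hΦ1 : Φ e1 = lam • e1) (hΦ2 : Φ e2 = -lam • e2)
    (hsq : ∀ x : W, Φ (Φ x)
      = -x + (2 * (1 + lam^2)) • ((B x e2) • e1 + (B x e1) • e2))
    (J : (W × ℝ × ℝ) → (W × ℝ × ℝ))
    (hJ : ∀ X : W × ℝ × ℝ, J X =
      (Φ X.1 + (X.2.1 * Real.sqrt (1 + lam^2)) • e1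
        + (X.2.2 * Real.sqrt (1 + lam^2)) • e2,
       -(Real.sqrt (1 + lam^2) * (2 * B X.1 e2)) - lam * X.2.1,
       -(Real.sqrt (1 + lam^2) * (2 * B X.1 e1)) + lam * X.2.2)) :
    -- `J` is indeed the extension described above:
    (∀ x : W, B x e1 = 0 → B x e2 = 0 → J (x, 0, 0) = (Φ x, 0, 0))
    ∧ J (e1, 0, 0) = (lam • e1, -Real.sqrt (1 + lam^2), 0)
    ∧ J (e2, 0, 0) = (-lam • e2, 0, -Real.sqrt (1 + lam^2))
    ∧ J (0, 1, 0) = (Real.sqrt (1 + lam^2) • e1, -lam, 0)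
    ∧ J (0, 0, 1) = (Real.sqrt (1 + lam^2) • e2, 0, lam)
    -- `J² = −Id`:
    ∧ (∀ X, J (J X) = -X)
    -- `J* = −J`:
    ∧ (∀ X Y, pairX B (J X) Y = - pairX B X (J Y)) :=
  J_from_sekiya_quadruple_general B hsymm Φ e1 e2 lam h11 h22 h12 hskew hΦ1 hΦ2 hsq J hJ
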